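/- arXiv:2112.08464 — 2 statements merged into one kernel-verified Lean document; each statement's English description precedes it below -/
import Mathlib

section
/- (Friedman convolution integral estimate) For constants α, β < n/2 + 1 and λ₀ > 0, for all x, y ∈ ℝⁿ and s > 0: ∫₀ˢ ∫_{ℝⁿ} (s-τ)^{-α} exp(-λ₀|x-ξ|²/(4(s-τ))) · τ^{-β} exp(-λ₀|ξ-y|²/(4τ)) dξ dτ ≤ (4π/λ₀)^{n/2} · [Γ(n/2-α+1)Γ(n/2-β+1)/Γ(n-α-β+2)] · s^{n/2+1-α-β} exp(-λ₀|x-y|²/(4s)), where Γ(·) is the Gamma function. -/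
open Real MeasureTheory

section Aux

variable {V : Type*} [NormedAddCommGroup V] [InnerProductSpace ℝ V]

private lemma friedman_key_sq (a b : ℝ) (hab : a + b ≠ 0) (x y ξ : V) :
    a * ‖x - ξ‖ ^ 2 + b * ‖ξ - y‖ ^ 2 =
      (a + b) * ‖ξ - (a + b)⁻¹ • (a • x + b • y)‖ ^ 2 + a * b / (a + b) * ‖x - y‖ ^ 2 := by
  simp only [← real_inner_self_eq_norm_sq, inner_sub_sub_self, inner_add_add_self,
    real_inner_smul_left, real_inner_smul_right, inner_add_left, inner_add_right]
  rw [real_inner_comm ξ x, real_inner_comm ξ y, real_inner_comm y x]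
  field_simp
  ring

private lemma friedman_gauss_conv (n : ℕ) (a b : ℝ) (ha : 0 < a) (hb : 0 < b)
    (x y : EuclideanSpace ℝ (Fin n)) :
    ∫ ξ : EuclideanSpace ℝ (Fin n), Real.exp (-(a * ‖x - ξ‖ ^ 2)) * Real.exp (-(b * ‖ξ - y‖ ^ 2))
      = (π / (a + b)) ^ ((n : ℝ) / 2) * Real.exp (-(a * b / (a + b) * ‖x - y‖ ^ 2)) := by
  have hab : a + b ≠ 0 := by positivity
  have h1 : ∀ ξ : EuclideanSpace ℝ (Fin n),
      Real.exp (-(a * ‖x - ξ‖ ^ 2)) * Real.exp (-(b * ‖ξ - y‖ ^ 2)) =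
        Real.exp (-((a + b) * ‖ξ - (a + b)⁻¹ • (a • x + b • y)‖ ^ 2)) *
          Real.exp (-(a * b / (a + b) * ‖x - y‖ ^ 2)) := by
    intro ξ
    rw [← Real.exp_add, ← Real.exp_add]
    congr 1
    have := friedman_key_sq a b hab x y ξ
    linarith
  simp_rw [h1]
  rw [integral_mul_const, integral_sub_right_eq_self
    (fun ξ : EuclideanSpace ℝ (Fin n) => Real.exp (-((a + b) * ‖ξ‖ ^ 2)))]
  congr 1
  have := GaussianFourier.integral_rexp_neg_mul_sq_norm
    (V := EuclideanSpace ℝ (Fin n)) (by positivity : (0:ℝ) < a + b)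
  simp only [neg_mul] at this ⊢
  rw [this, finrank_euclideanSpace_fin]

private lemma friedman_real_beta (p q : ℝ) (hp : -1 < p) (hq : -1 < q) :
    ∫ t in (0:ℝ)..1, t ^ p * (1 - t) ^ q
      = Real.Gamma (p + 1) * Real.Gamma (q + 1) / Real.Gamma (p + q + 2) := by
  have hp1 : (0:ℝ) < p + 1 := by linarith
  have hq1 : (0:ℝ) < q + 1 := by linarith
  have hpq : (0:ℝ) < p + q + 2 := by linarith
  have h := Complex.Gamma_mul_Gamma_eq_betaIntegral
    (s := ((p:ℂ) + 1)) (t := ((q:ℂ) + 1)) (by simpa using hp1) (by simpa using hq1)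
  have hbeta : Complex.betaIntegral ((p:ℂ) + 1) ((q:ℂ) + 1)
      = ((∫ t in (0:ℝ)..1, t ^ p * (1 - t) ^ q : ℝ) : ℂ) := by
    rw [Complex.betaIntegral, ← intervalIntegral.integral_ofReal]
    apply intervalIntegral.integral_congr
    intro t ht
    rw [Set.uIcc_of_le (by norm_num : (0:ℝ) ≤ 1)] at ht
    have h0 : (0:ℝ) ≤ t := ht.1
    have h1 : (0:ℝ) ≤ 1 - t := by linarith [ht.2]
    simp only [add_sub_cancel_right]
    rw [show ((1:ℂ) - (t:ℂ)) = ((1 - t : ℝ) : ℂ) by push_cast; ring,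
      ← Complex.ofReal_cpow h0, ← Complex.ofReal_cpow h1]
    push_cast
    ring
  rw [hbeta] at h
  have hG1 : Complex.Gamma ((p:ℂ) + 1) = (Real.Gamma (p + 1) : ℂ) := by
    rw [← Complex.Gamma_ofReal]; push_cast; ring_nf
  have hG2 : Complex.Gamma ((q:ℂ) + 1) = (Real.Gamma (q + 1) : ℂ) := by
    rw [← Complex.Gamma_ofReal]; push_cast; ring_nf
  have hG3 : Complex.Gamma ((p:ℂ) + 1 + ((q:ℂ) + 1)) = (Real.Gamma (p + q + 2) : ℂ) := by
    rw [← Complex.Gamma_ofReal]; push_cast; ring_nf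
  rw [hG1, hG2, hG3] at h
  have h' : Real.Gamma (p + 1) * Real.Gamma (q + 1)
      = Real.Gamma (p + q + 2) * ∫ t in (0:ℝ)..1, t ^ p * (1 - t) ^ q := by
    exact_mod_cast h
  have hGpos := Real.Gamma_pos_of_pos hpq
  field_simp
  linarith [h']

private lemma friedman_beta_Ioo (p q s : ℝ) (hp : -1 < p) (hq : -1 < q) (hs : 0 < s) :
    ∫ τ in Set.Ioo (0:ℝ) s, τ ^ p * (s - τ) ^ q
      = Real.Gamma (p + 1) * Real.Gamma (q + 1) / Real.Gamma (p + q + 2) * s ^ (p + q + 1) := by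
  have h1 : ∫ τ in Set.Ioo (0:ℝ) s, τ ^ p * (s - τ) ^ q
      = ∫ τ in (0:ℝ)..s, τ ^ p * (s - τ) ^ q := by
    rw [intervalIntegral.integral_of_le hs.le, integral_Ioc_eq_integral_Ioo]
  rw [h1]
  have h2 := intervalIntegral.integral_comp_mul_left
    (fun τ => τ ^ p * (s - τ) ^ q) (ne_of_gt hs) (a := (0:ℝ)) (b := 1)
  simp only [mul_zero, mul_one] at h2
  have h2' : ∫ τ in (0:ℝ)..s, τ ^ p * (s - τ) ^ q
      = s • ∫ u in (0:ℝ)..1, (s * u) ^ p * (s - s * u) ^ q := by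
    rw [h2, smul_smul, mul_inv_cancel₀ (ne_of_gt hs), one_smul]
  rw [h2']
  have h3 : ∫ u in (0:ℝ)..1, (s * u) ^ p * (s - s * u) ^ q
      = (s ^ p * s ^ q) * ∫ u in (0:ℝ)..1, u ^ p * (1 - u) ^ q := by
    rw [← intervalIntegral.integral_const_mul]
    apply intervalIntegral.integral_congr
    intro u hu
    rw [Set.uIcc_of_le (by norm_num : (0:ℝ) ≤ 1)] at hu
    have h0 : (0:ℝ) ≤ u := hu.1
    have h1u : (0:ℝ) ≤ 1 - u := by linarith [hu.2]
    have e1 : (s * u) ^ p = s ^ p * u ^ p := Real.mul_rpow hs.le h0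
    have e2 : (s - s * u) ^ q = s ^ q * (1 - u) ^ q := by
      rw [show s - s * u = s * (1 - u) by ring, Real.mul_rpow hs.le h1u]
    show (s * u) ^ p * (s - s * u) ^ q = s ^ p * s ^ q * (u ^ p * (1 - u) ^ q)
    rw [e1, e2]; ring
  rw [h3, friedman_real_beta p q hp hq, smul_eq_mul]
  rw [show p + q + 1 = 1 + (p + q) by ring, Real.rpow_add hs, Real.rpow_one,
    Real.rpow_add hs]
  ring

end Aux

theorem friedman_convolution_integral_estimate (n : ℕ) (α β lam0 : ℝ)
    (hα : α < (n : ℝ) / 2 + 1) (hβ : β < (n : ℝ) / 2 + 1) (hlam : 0 < lam0)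
    (x y : EuclideanSpace ℝ (Fin n)) (s : ℝ) (hs : 0 < s) :
    (∫ τ in Set.Ioo (0 : ℝ) s, ∫ ξ : EuclideanSpace ℝ (Fin n),
        (s - τ) ^ (-α) * Real.exp (-(lam0 * ‖x - ξ‖ ^ 2) / (4 * (s - τ))) *
          (τ ^ (-β) * Real.exp (-(lam0 * ‖ξ - y‖ ^ 2) / (4 * τ))))
      ≤ (4 * π / lam0) ^ ((n : ℝ) / 2) *
          (Real.Gamma ((n : ℝ) / 2 - α + 1) * Real.Gamma ((n : ℝ) / 2 - β + 1) /
            Real.Gamma ((n : ℝ) - α - β + 2)) *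
          s ^ ((n : ℝ) / 2 + 1 - α - β) * Real.exp (-(lam0 * ‖x - y‖ ^ 2) / (4 * s)) := by
  apply le_of_eq
  set K : ℝ := (4 * π / lam0) ^ ((n : ℝ) / 2) * s ^ (-((n : ℝ) / 2)) *
    Real.exp (-(lam0 * ‖x - y‖ ^ 2) / (4 * s)) with hK
  have hstep : ∀ τ ∈ Set.Ioo (0:ℝ) s,
      (∫ ξ : EuclideanSpace ℝ (Fin n),
        (s - τ) ^ (-α) * Real.exp (-(lam0 * ‖x - ξ‖ ^ 2) / (4 * (s - τ))) *
          (τ ^ (-β) * Real.exp (-(lam0 * ‖ξ - y‖ ^ 2) / (4 * τ))))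
      = K * (τ ^ ((n:ℝ)/2 - β) * (s - τ) ^ ((n:ℝ)/2 - α)) := by
    intro τ hτ
    obtain ⟨hτ0, hτs⟩ := hτ
    have hsτ : 0 < s - τ := by linarith
    set a : ℝ := lam0 / (4 * (s - τ)) with hadef
    set b : ℝ := lam0 / (4 * τ) with hbdef
    have ha : 0 < a := by positivity
    have hb : 0 < b := by positivity
    have hab : a + b = lam0 * s / (4 * τ * (s - τ)) := by
      rw [hadef, hbdef]; field_simp; ring
    have habpos : 0 < a + b := by positivity
    have hrw : ∀ ξ : EuclideanSpace ℝ (Fin n),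
        (s - τ) ^ (-α) * Real.exp (-(lam0 * ‖x - ξ‖ ^ 2) / (4 * (s - τ))) *
          (τ ^ (-β) * Real.exp (-(lam0 * ‖ξ - y‖ ^ 2) / (4 * τ)))
        = ((s - τ) ^ (-α) * τ ^ (-β)) *
            (Real.exp (-(a * ‖x - ξ‖ ^ 2)) * Real.exp (-(b * ‖ξ - y‖ ^ 2))) := by
      intro ξ
      have e1 : -(lam0 * ‖x - ξ‖ ^ 2) / (4 * (s - τ)) = -(a * ‖x - ξ‖ ^ 2) := by
        rw [hadef]; ring
      have e2 : -(lam0 * ‖ξ - y‖ ^ 2) / (4 * τ) = -(b * ‖ξ - y‖ ^ 2) := by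
        rw [hbdef]; ring
      rw [e1, e2]; ring
    simp_rw [hrw]
    rw [MeasureTheory.integral_const_mul, friedman_gauss_conv n a b ha hb x y]
    have hquot : a * b / (a + b) = lam0 / (4 * s) := by
      rw [hab, hadef, hbdef]
      field_simp
    have hexp : -(a * b / (a + b) * ‖x - y‖ ^ 2) = -(lam0 * ‖x - y‖ ^ 2) / (4 * s) := by
      rw [hquot]; ring
    have hbase : π / (a + b) = (4 * π / lam0) * s⁻¹ * (τ * (s - τ)) := by
      rw [hab]
      field_simp
    have hpow : (π / (a + b)) ^ ((n:ℝ)/2)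
        = (4 * π / lam0) ^ ((n:ℝ)/2) * s ^ (-((n:ℝ)/2)) *
            (τ ^ ((n:ℝ)/2) * (s - τ) ^ ((n:ℝ)/2)) := by
      rw [hbase, Real.mul_rpow (by positivity) (by positivity),
        Real.mul_rpow (by positivity) (by positivity),
        Real.mul_rpow hτ0.le hsτ.le, Real.inv_rpow hs.le, ← Real.rpow_neg hs.le]
    rw [hexp, hpow, hK]
    have hτpow : τ ^ (-β) * τ ^ ((n:ℝ)/2) = τ ^ ((n:ℝ)/2 - β) := by
      rw [← Real.rpow_add hτ0]; congr 1; ring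
    have hsτpow : (s - τ) ^ (-α) * (s - τ) ^ ((n:ℝ)/2) = (s - τ) ^ ((n:ℝ)/2 - α) := by
      rw [← Real.rpow_add hsτ]; congr 1; ring
    calc (s - τ) ^ (-α) * τ ^ (-β) *
          ((4 * π / lam0) ^ ((n:ℝ)/2) * s ^ (-((n:ℝ)/2)) *
            (τ ^ ((n:ℝ)/2) * (s - τ) ^ ((n:ℝ)/2)) *
            Real.exp (-(lam0 * ‖x - y‖ ^ 2) / (4 * s)))
        = (4 * π / lam0) ^ ((n:ℝ)/2) * s ^ (-((n:ℝ)/2)) *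
            Real.exp (-(lam0 * ‖x - y‖ ^ 2) / (4 * s)) *
            ((τ ^ (-β) * τ ^ ((n:ℝ)/2)) * ((s - τ) ^ (-α) * (s - τ) ^ ((n:ℝ)/2))) := by
          ring
      _ = _ := by rw [hτpow, hsτpow]
  rw [setIntegral_congr_fun measurableSet_Ioo hstep, MeasureTheory.integral_const_mul,
    friedman_beta_Ioo ((n:ℝ)/2 - β) ((n:ℝ)/2 - α) s (by linarith) (by linarith) hs]
  have hG : (n:ℝ)/2 - β + ((n:ℝ)/2 - α) + 2 = (n:ℝ) - α - β + 2 := by ring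
  have hspow : s ^ (-((n:ℝ)/2)) * s ^ ((n:ℝ)/2 - β + ((n:ℝ)/2 - α) + 1)
      = s ^ ((n:ℝ)/2 + 1 - α - β) := by
    rw [← Real.rpow_add hs]; congr 1; ring
  rw [hK, hG]
  calc (4 * π / lam0) ^ ((n:ℝ)/2) * s ^ (-((n:ℝ)/2)) *
        Real.exp (-(lam0 * ‖x - y‖ ^ 2) / (4 * s)) *
        (Real.Gamma ((n:ℝ)/2 - β + 1) * Real.Gamma ((n:ℝ)/2 - α + 1) /
          Real.Gamma ((n:ℝ) - α - β + 2) * s ^ ((n:ℝ)/2 - β + ((n:ℝ)/2 - α) + 1))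
      = (4 * π / lam0) ^ ((n:ℝ)/2) *
          (Real.Gamma ((n:ℝ)/2 - α + 1) * Real.Gamma ((n:ℝ)/2 - β + 1) /
            Real.Gamma ((n:ℝ) - α - β + 2)) *
          (s ^ (-((n:ℝ)/2)) * s ^ ((n:ℝ)/2 - β + ((n:ℝ)/2 - α) + 1)) *
          Real.exp (-(lam0 * ‖x - y‖ ^ 2) / (4 * s)) := by ring
    _ = _ := by rw [hspow]
end

section
/- Let G be a symmetric positive definite matrix with Q^{-1}I ≤ G ≤ QI, 1 < Q < √2, and define Z(x,s;y) = √(det G)(4πs)^{-n/2}exp(-((x-y)·G(x-y))/(4s)) and Γ_E(x,s;y) = (4πs)^{-n/2}exp(-|x-y|²/(4s)). Then there is a constant C = C(n) such that for all (x,s) with |x-y| ≥ 1/2 or s ≥ 1/4 (and 0 < s ≤ 4), |Γ_E(x,s;y) − Z(x,s;y)| ≤ C(Q−1). -/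
open Real

private lemma gc_exp_diff {u w m : ℝ} (hmu : m ≤ u) (hmw : m ≤ w) :
    |Real.exp (-u) - Real.exp (-w)| ≤ Real.exp (-m) * |u - w| := by
  have key : ∀ a b : ℝ, a ≤ b → m ≤ a →
      Real.exp (-a) - Real.exp (-b) ≤ Real.exp (-m) * (b - a) := by
    intro a b hab hma
    have h1 : 1 + -(b - a) ≤ Real.exp (-(b - a)) := by
      have := Real.add_one_le_exp (-(b - a)); linarith
    have h2 : Real.exp (-b) = Real.exp (-a) * Real.exp (-(b - a)) := by
      rw [← Real.exp_add]; ring_nf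
    have h3 : Real.exp (-a) ≤ Real.exp (-m) := Real.exp_le_exp.2 (by linarith)
    nlinarith [Real.exp_pos (-a), Real.exp_pos (-m),
      mul_nonneg (sub_nonneg.2 h3) (sub_nonneg.2 hab)]
  rcases le_total u w with h | h
  · rw [abs_of_nonneg (sub_nonneg.2 (Real.exp_le_exp.2 (by linarith))),
      abs_of_nonpos (by linarith)]
    have := key u w h hmu; linarith
  · rw [abs_of_nonpos (sub_nonpos.2 (Real.exp_le_exp.2 (by linarith))),
      abs_of_nonneg (by linarith)]
    have := key w u h hmw; linarith

private lemma gc_pow_sub_one (n : ℕ) {Q : ℝ} (h1 : 1 ≤ Q) (h2 : Q ≤ 2) :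
    Q ^ n - 1 ≤ (n : ℝ) * 2 ^ n * (Q - 1) := by
  induction n with
  | zero => simp
  | succ k ih =>
    have hQ0 : (0:ℝ) ≤ Q := by linarith
    have hp : Q ^ k ≤ 2 ^ k := pow_le_pow_left₀ hQ0 h2 k
    have hp1 : (1:ℝ) ≤ Q ^ k := one_le_pow₀ h1
    have hp2 : (1:ℝ) ≤ (2:ℝ) ^ k := one_le_pow₀ (by norm_num)
    have hk : (0:ℝ) ≤ (k:ℝ) := Nat.cast_nonneg k
    push_cast
    rw [pow_succ, pow_succ]
    nlinarith [mul_nonneg (sub_nonneg.2 h2) (sub_nonneg.2 hp1),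
      mul_nonneg (sub_nonneg.2 h1) (sub_nonneg.2 hp2),
      mul_nonneg (mul_nonneg hk (by positivity : (0:ℝ) ≤ (2:ℝ)^k)) (sub_nonneg.2 h1)]

private lemma gc_kb (n : ℕ) {s u : ℝ} (hs : 0 < s) (hs4 : s ≤ 4) (hu : 0 ≤ u)
    (h : 1/(16*s) ≤ u ∨ 1/4 ≤ s) :
    (4*π*s) ^ (-(n:ℝ)/2) * Real.exp (-(u/4)) ≤ (n.factorial : ℝ) * 64^n := by
  have hK : (1:ℝ) ≤ (n.factorial : ℝ) * 64^n := by
    have h1 : (1:ℝ) ≤ (n.factorial : ℝ) := by exact_mod_cast n.factorial_pos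
    have h2 : (1:ℝ) ≤ 64^n := one_le_pow₀ (by norm_num)
    nlinarith
  have hexp : -(n:ℝ)/2 ≤ 0 := by
    have : (0:ℝ) ≤ (n:ℝ) := Nat.cast_nonneg n
    linarith
  have hpi := Real.pi_gt_three
  rcases h with h | h
  · set x : ℝ := 1/(64*s) with hxdef
    have hx : 0 < x := by positivity
    have hstep1 : Real.exp (-(u/4)) ≤ Real.exp (-x) := by
      apply Real.exp_le_exp.2
      have hh : (1:ℝ)/(16*s)/4 = x := by rw [hxdef]; ring
      linarith
    have hfac : (0:ℝ) < (n.factorial : ℝ) := by exact_mod_cast n.factorial_pos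
    have hpf := Real.pow_div_factorial_le_exp x hx.le n
    have hmul : Real.exp (-x) * x^n ≤ (n.factorial : ℝ) := by
      calc Real.exp (-x) * x^n
          ≤ Real.exp (-x) * ((n.factorial : ℝ) * Real.exp x) := by
            apply mul_le_mul_of_nonneg_left _ (Real.exp_pos _).le
            rw [div_le_iff₀ hfac] at hpf; linarith
        _ = (n.factorial : ℝ) := by
            rw [mul_comm (Real.exp (-x)), mul_assoc, ← Real.exp_add]; simp
    have hxinv : x^n * (64*s)^n = 1 := by
      rw [← mul_pow, hxdef]
      rw [show 1/(64*s) * (64*s) = 1 by field_simp]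
      simp
    have hstep2 : Real.exp (-x) ≤ (n.factorial : ℝ) * (64*s)^n := by
      have h64 : (0:ℝ) ≤ (64*s)^n := by positivity
      calc Real.exp (-x) = Real.exp (-x) * (x^n * (64*s)^n) := by rw [hxinv]; ring
        _ = Real.exp (-x) * x^n * (64*s)^n := by ring
        _ ≤ (n.factorial : ℝ) * (64*s)^n := mul_le_mul_of_nonneg_right hmul h64
    have h4s : (0:ℝ) < 4*s := by linarith
    have hstep3 : (4*π*s) ^ (-(n:ℝ)/2) ≤ (4*s) ^ (-(n:ℝ)/2) :=
      Real.rpow_le_rpow_of_nonpos h4s (by nlinarith) hexp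
    have hsq : (4*s) ^ (-(n:ℝ)/2) = ((Real.sqrt (4*s))⁻¹)^n := by
      rw [show (-(n:ℝ)/2) = -(1/2) * (n:ℕ) by ring]
      rw [Real.rpow_mul h4s.le, Real.rpow_natCast]
      congr 1
      rw [Real.rpow_neg h4s.le, Real.sqrt_eq_rpow]
    have hsle : s ≤ Real.sqrt (4*s) := by
      nlinarith [Real.sq_sqrt h4s.le, Real.sqrt_nonneg (4*s)]
    have hsqpos : 0 < Real.sqrt (4*s) := Real.sqrt_pos.2 h4s
    have hbase : (Real.sqrt (4*s))⁻¹ * s ≤ 1 := by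
      rw [inv_mul_le_iff₀ hsqpos, mul_one]; exact hsle
    have hstep4 : (4*s) ^ (-(n:ℝ)/2) * (64*s)^n ≤ 64^n := by
      rw [hsq, show (64*s)^n = 64^n * s^n by rw [mul_pow]]
      calc ((Real.sqrt (4*s))⁻¹)^n * (64^n * s^n)
          = ((Real.sqrt (4*s))⁻¹ * s)^n * 64^n := by rw [mul_pow]; ring
        _ ≤ 1^n * 64^n := by
            apply mul_le_mul_of_nonneg_right _ (by positivity)
            exact pow_le_pow_left₀ (by positivity) hbase n
        _ = 64^n := by simp
    calc (4*π*s) ^ (-(n:ℝ)/2) * Real.exp (-(u/4))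
        ≤ (4*s) ^ (-(n:ℝ)/2) * ((n.factorial : ℝ) * (64*s)^n) := by
          apply mul_le_mul hstep3 (le_trans hstep1 hstep2) (Real.exp_pos _).le
          positivity
      _ = (n.factorial : ℝ) * ((4*s) ^ (-(n:ℝ)/2) * (64*s)^n) := by ring
      _ ≤ (n.factorial : ℝ) * 64^n := mul_le_mul_of_nonneg_left hstep4 hfac.le
  · have h1 : (1:ℝ) ≤ 4*π*s := by nlinarith
    have h2 : (4*π*s) ^ (-(n:ℝ)/2) ≤ 1 := Real.rpow_le_one_of_one_le_of_nonpos h1 hexp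
    have h3 : Real.exp (-(u/4)) ≤ 1 := Real.exp_le_one_iff.2 (by linarith)
    have h4 : (0:ℝ) < (4*π*s) ^ (-(n:ℝ)/2) := Real.rpow_pos_of_pos (by positivity) _
    nlinarith [Real.exp_pos (-(u/4))]

private lemma gc_det (n : ℕ) {Q : ℝ} (hQ : 1 < Q)
    (G : Matrix (Fin n) (Fin n) ℝ) (hsymm : G.IsSymm)
    (hlo : ∀ v : EuclideanSpace ℝ (Fin n), Q⁻¹ * ‖v‖ ^ 2 ≤ ∑ a, ∑ b, G a b * v a * v b)
    (hhi : ∀ v : EuclideanSpace ℝ (Fin n), ∑ a, ∑ b, G a b * v a * v b ≤ Q * ‖v‖ ^ 2) :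
    Q⁻¹ ^ n ≤ G.det ∧ G.det ≤ Q ^ n := by
  have hH : G.IsHermitian := by
    rw [Matrix.IsHermitian, Matrix.conjTranspose_eq_transpose_of_trivial]; exact hsymm
  have hquad : ∀ i, hH.eigenvalues i =
      ∑ a, ∑ b, G a b * (hH.eigenvectorBasis i) a * (hH.eigenvectorBasis i) b := by
    intro i
    rw [hH.eigenvalues_eq i]
    simp only [RCLike.star_def, star_trivial, dotProduct, Matrix.mulVec,
      RCLike.re_to_real, Finset.mul_sum]
    exact Finset.sum_congr rfl fun a _ => Finset.sum_congr rfl fun b _ => by ring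
  have hnorm : ∀ i, ‖hH.eigenvectorBasis i‖ = 1 := fun i =>
    hH.eigenvectorBasis.orthonormal.1 i
  have hev : ∀ i, Q⁻¹ ≤ hH.eigenvalues i ∧ hH.eigenvalues i ≤ Q := by
    intro i
    constructor
    · have := hlo (hH.eigenvectorBasis i); rw [hnorm i] at this
      simpa [← hquad i] using this
    · have := hhi (hH.eigenvectorBasis i); rw [hnorm i] at this
      simpa [← hquad i] using this
  have hdet : G.det = ∏ i, hH.eigenvalues i := by
    simpa using hH.det_eq_prod_eigenvalues
  rw [hdet]
  constructor
  · calc Q⁻¹ ^ n = ∏ _i : Fin n, Q⁻¹ := by simp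
      _ ≤ ∏ i, hH.eigenvalues i := Finset.prod_le_prod (fun i _ => by positivity)
          (fun i _ => (hev i).1)
  · calc ∏ i, hH.eigenvalues i ≤ ∏ _i : Fin n, Q := Finset.prod_le_prod
          (fun i _ => le_trans (by positivity) (hev i).1) (fun i _ => (hev i).2)
      _ = Q ^ n := by simp

private lemma gc_abs_sqrt {B d : ℝ} (hd : 0 < d) (h : |1 - d| ≤ B) :
    |1 - Real.sqrt d| ≤ B := by
  have hD0 : 0 ≤ Real.sqrt d := Real.sqrt_nonneg d
  have hD2 : Real.sqrt d ^ 2 = d := Real.sq_sqrt hd.le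
  revert h hD0 hD2
  generalize Real.sqrt d = D
  intro hD2 hD0 h
  rcases le_total D 1 with hle | hle
  · rw [abs_of_nonneg (by linarith)]
    have h1 : 1 - D ≤ 1 - d := by nlinarith
    have h2 : 1 - d ≤ |1 - d| := le_abs_self _
    linarith
  · rw [abs_of_nonpos (by linarith)]
    have h1 : D - 1 ≤ d - 1 := by nlinarith
    have h2 : -(1 - d) ≤ |1 - d| := neg_le_abs _
    linarith

private lemma gc_sqrtdet (n : ℕ) {Q d : ℝ} (hQ : 1 < Q) (hQ2 : Q ≤ 2)
    (hd1 : Q⁻¹ ^ n ≤ d) (hd2 : d ≤ Q ^ n) :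
    |1 - Real.sqrt d| ≤ (n : ℝ) * 2 ^ n * (Q - 1) := by
  have hQpos : (0:ℝ) < Q := by linarith
  have hQQ : Q * Q⁻¹ = 1 := mul_inv_cancel₀ (ne_of_gt hQpos)
  have hd0 : (0:ℝ) < d := lt_of_lt_of_le (pow_pos (inv_pos.2 hQpos) n) hd1
  have hQn1 : (1:ℝ) ≤ Q ^ n := one_le_pow₀ hQ.le
  have hQnpos : (0:ℝ) < Q ^ n := pow_pos hQpos n
  have hQninv : Q ^ n * Q⁻¹ ^ n = 1 := by rw [← mul_pow, hQQ, one_pow]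
  have hdet1 : |1 - d| ≤ Q ^ n - 1 := by
    rw [abs_le]
    constructor
    · nlinarith
    · nlinarith [sq_nonneg (Q ^ n - 1)]
  have := gc_pow_sub_one n hQ.le hQ2
  exact le_trans (gc_abs_sqrt hd0 hdet1) (by linarith)

set_option maxHeartbeats 1000000 in
private lemma gc_core (n : ℕ) {Q P r2 q S D K : ℝ}
    (hQ : 1 < Q) (hQ2 : Q ≤ 2) (hS : 0 < S) (hP : 0 < P)
    (hr2 : 0 ≤ r2) (hq_lo : Q⁻¹ * r2 ≤ q) (hq_hi : q ≤ Q * r2)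
    (hD0 : 0 ≤ D) (hDbound : |1 - D| ≤ (n : ℝ) * 2 ^ n * (Q - 1))
    (hPK : P * Real.exp (-(r2 / S / 4)) ≤ K) :
    |P * Real.exp (-r2 / S) - D * P * Real.exp (-q / S)|
      ≤ (2 + (n : ℝ) * 2 ^ n) * (4 * K) * (Q - 1) := by
  have hDn0 : (0:ℝ) ≤ (n : ℝ) * 2 ^ n := by positivity
  have hQpos : (0:ℝ) < Q := by linarith
  have hQ1 : (0:ℝ) ≤ Q - 1 := by linarith
  have hQQ : Q * Q⁻¹ = 1 := mul_inv_cancel₀ (ne_of_gt hQpos)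
  have hq0 : 0 ≤ q := le_trans (mul_nonneg (inv_nonneg.2 hQpos.le) hr2) hq_lo
  have hr2Qq : r2 ≤ Q * q := by
    have h := mul_le_mul_of_nonneg_left hq_lo hQpos.le
    rw [← mul_assoc, hQQ, one_mul] at h; exact h
  have hu0 : 0 ≤ r2 / S := div_nonneg hr2 hS.le
  have hw0 : 0 ≤ q / S := div_nonneg hq0 hS.le
  have hmin : r2 / S / 2 ≤ q / S := by
    rw [show r2 / S / 2 = (r2 / 2) / S by ring]
    apply div_le_div_of_nonneg_right ?_ hS.le
    nlinarith
  have habsnum : |r2 - q| ≤ 2 * (Q - 1) * r2 := by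
    rw [abs_le]
    constructor
    · nlinarith
    · nlinarith [mul_nonneg hQ1 (by nlinarith : (0:ℝ) ≤ 2 * r2 - q)]
  have habsuw : |r2 / S - q / S| ≤ 2 * (Q - 1) * (r2 / S) := by
    rw [div_sub_div_same, abs_div, abs_of_pos hS,
      show 2 * (Q - 1) * (r2 / S) = (2 * (Q - 1) * r2) / S by ring]
    exact div_le_div_of_nonneg_right habsnum hS.le
  -- exp facts with raw terms
  have e1 : -r2 / S = -(r2 / S) := neg_div _ _
  have e2 : -q / S = -(q / S) := neg_div _ _
  rw [e1, e2]
  have f1 : |Real.exp (-(r2 / S)) - Real.exp (-(q / S))| ≤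
      Real.exp (-(r2 / S / 2)) * |r2 / S - q / S| :=
    gc_exp_diff (by linarith) hmin
  have f2 : Real.exp (-(q / S)) ≤ Real.exp (-(r2 / S / 2)) :=
    Real.exp_le_exp.2 (by linarith)
  have f3 : (1 + r2 / S) * Real.exp (-(r2 / S / 4)) ≤ 4 := by
    have h1 := Real.add_one_le_exp (r2 / S / 4)
    calc (1 + r2 / S) * Real.exp (-(r2 / S / 4))
        ≤ (4 * Real.exp (r2 / S / 4)) * Real.exp (-(r2 / S / 4)) := by
          apply mul_le_mul_of_nonneg_right ?_ (Real.exp_pos _).le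
          linarith
      _ = 4 * Real.exp (r2 / S / 4 + -(r2 / S / 4)) := by rw [Real.exp_add]; ring
      _ = 4 := by simp
  have f4 : Real.exp (-(r2 / S / 2)) = Real.exp (-(r2 / S / 4)) * Real.exp (-(r2 / S / 4)) := by
    rw [← Real.exp_add]; ring_nf
  have f5 : 0 < Real.exp (-(r2 / S / 2)) := Real.exp_pos _
  have f6 : 0 < Real.exp (-(r2 / S / 4)) := Real.exp_pos _
  have f7 : 0 < Real.exp (-(q / S)) := Real.exp_pos _
  have f8 : 0 < Real.exp (-(r2 / S)) := Real.exp_pos _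
  -- make everything opaque
  obtain ⟨u, hu⟩ : ∃ t, r2 / S = t := ⟨_, rfl⟩
  obtain ⟨A, hA⟩ : ∃ t, Real.exp (-(r2 / S)) = t := ⟨_, rfl⟩
  obtain ⟨B, hB⟩ : ∃ t, Real.exp (-(q / S)) = t := ⟨_, rfl⟩
  obtain ⟨E2, hE2⟩ : ∃ t, Real.exp (-(r2 / S / 2)) = t := ⟨_, rfl⟩
  obtain ⟨E4, hE4⟩ : ∃ t, Real.exp (-(r2 / S / 4)) = t := ⟨_, rfl⟩
  rw [hu] at hu0 habsuw
  rw [hA, hB] at f1 ⊢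
  rw [hB] at f2 f7
  rw [hE2] at f1 f2 f4 f5
  rw [hE4] at f3 f4 f6 hPK
  rw [hu] at f1 f3
  -- pure arithmetic from here
  have hM : 0 < P * E2 := mul_pos hP f5
  have a1 : P * E2 * u ≤ P * E2 * (1 + u) :=
    mul_le_mul_of_nonneg_left (by linarith : u ≤ 1 + u) hM.le
  have a2 : P * E2 ≤ P * E2 * (1 + u) := by nlinarith [mul_nonneg hM.le hu0]
  have hgap2 : E2 * (1 + u) ≤ 4 * E4 := by
    calc E2 * (1 + u) = ((1 + u) * E4) * E4 := by rw [f4]; ring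
      _ ≤ 4 * E4 := mul_le_mul_of_nonneg_right f3 f6.le
  have hDn2 : (0:ℝ) ≤ 2 + (n : ℝ) * 2 ^ n := by linarith
  calc |P * A - D * P * B|
      ≤ P * |A - B| + |1 - D| * (P * B) := by
        have heq : P * A - D * P * B = P * (A - B) + (1 - D) * (P * B) := by ring
        rw [heq]
        refine (abs_add_le _ _).trans (le_of_eq ?_)
        rw [abs_mul, abs_mul, abs_of_pos hP, abs_of_pos (mul_pos hP f7)]
    _ ≤ P * (E2 * (2 * (Q - 1) * u)) + ((n : ℝ) * 2 ^ n * (Q - 1)) * (P * E2) := by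
        apply add_le_add
        · apply mul_le_mul_of_nonneg_left _ hP.le
          exact f1.trans (mul_le_mul_of_nonneg_left habsuw f5.le)
        · exact mul_le_mul hDbound (mul_le_mul_of_nonneg_left f2 hP.le)
            (mul_pos hP f7).le (mul_nonneg hDn0 hQ1)
    _ = (Q - 1) * (2 * (P * E2 * u) + (n : ℝ) * 2 ^ n * (P * E2)) := by ring
    _ ≤ (Q - 1) * ((2 + (n : ℝ) * 2 ^ n) * (P * E2 * (1 + u))) := by
        apply mul_le_mul_of_nonneg_left _ hQ1
        nlinarith [mul_le_mul_of_nonneg_left a2 hDn0, a1]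
    _ ≤ (Q - 1) * ((2 + (n : ℝ) * 2 ^ n) * (4 * (P * E4))) := by
        apply mul_le_mul_of_nonneg_left _ hQ1
        apply mul_le_mul_of_nonneg_left _ hDn2
        calc P * E2 * (1 + u) = P * (E2 * (1 + u)) := by ring
          _ ≤ P * (4 * E4) := mul_le_mul_of_nonneg_left hgap2 hP.le
          _ = 4 * (P * E4) := by ring
    _ ≤ (Q - 1) * ((2 + (n : ℝ) * 2 ^ n) * (4 * K)) := by
        apply mul_le_mul_of_nonneg_left _ hQ1
        apply mul_le_mul_of_nonneg_left _ hDn2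
        exact mul_le_mul_of_nonneg_left hPK (by norm_num)
    _ = (2 + (n : ℝ) * 2 ^ n) * (4 * K) * (Q - 1) := by ring

set_option maxHeartbeats 1000000 in
theorem gaussian_comparison_away_from_singularity (n : ℕ) :
    ∃ C : ℝ, 0 < C ∧ ∀ Q : ℝ, 1 < Q → Q < Real.sqrt 2 →
      ∀ G : Matrix (Fin n) (Fin n) ℝ, G.IsSymm →
        (∀ v : EuclideanSpace ℝ (Fin n),
          Q⁻¹ * ‖v‖ ^ 2 ≤ ∑ a, ∑ b, G a b * v a * v b) →
        (∀ v : EuclideanSpace ℝ (Fin n),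
          ∑ a, ∑ b, G a b * v a * v b ≤ Q * ‖v‖ ^ 2) →
        ∀ (x y : EuclideanSpace ℝ (Fin n)) (s : ℝ), 0 < s → s ≤ 4 →
          (1 / 2 ≤ ‖x - y‖ ∨ 1 / 4 ≤ s) →
          |(4 * π * s) ^ (-(n : ℝ) / 2) * Real.exp (-‖x - y‖ ^ 2 / (4 * s)) -
              Real.sqrt G.det * (4 * π * s) ^ (-(n : ℝ) / 2) *
                Real.exp (-(∑ a, ∑ b, G a b * (x a - y a) * (x b - y b)) / (4 * s))|
            ≤ C * (Q - 1) := by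
  have hfac : (0:ℝ) < (n.factorial : ℝ) := by exact_mod_cast n.factorial_pos
  refine ⟨(2 + (n : ℝ) * 2 ^ n) * (4 * ((n.factorial : ℝ) * 64 ^ n)), by positivity, ?_⟩
  intro Q hQ hq2 G hsymm hlo hhi x y s hs hs4 hcase
  have hQ2 : Q ≤ 2 := by
    nlinarith [Real.sq_sqrt (show (0:ℝ) ≤ 2 by norm_num), Real.sqrt_nonneg 2]
  have hqeq : (∑ a, ∑ b, G a b * (x - y) a * (x - y) b)
      = ∑ a, ∑ b, G a b * (x a - y a) * (x b - y b) :=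
    Finset.sum_congr rfl fun a _ => Finset.sum_congr rfl fun b _ => by
      rw [PiLp.sub_apply, PiLp.sub_apply]
  have hq_lo : Q⁻¹ * ‖x - y‖ ^ 2 ≤ ∑ a, ∑ b, G a b * (x a - y a) * (x b - y b) := by
    have := hlo (x - y); rwa [hqeq] at this
  have hq_hi : (∑ a, ∑ b, G a b * (x a - y a) * (x b - y b)) ≤ Q * ‖x - y‖ ^ 2 := by
    have := hhi (x - y); rwa [hqeq] at this
  have hdetb := gc_det n hQ G hsymm hlo hhi
  have hDbound := gc_sqrtdet n hQ hQ2 hdetb.1 hdetb.2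
  have hS : (0:ℝ) < 4 * s := by linarith
  have hP : (0:ℝ) < (4 * π * s) ^ (-(n : ℝ) / 2) :=
    Real.rpow_pos_of_pos (by positivity) _
  have hu0 : (0:ℝ) ≤ ‖x - y‖ ^ 2 / (4 * s) := by positivity
  have hPK : (4 * π * s) ^ (-(n : ℝ) / 2) * Real.exp (-(‖x - y‖ ^ 2 / (4 * s) / 4))
      ≤ (n.factorial : ℝ) * 64 ^ n := by
    apply gc_kb n hs hs4 hu0
    rcases hcase with h | h
    · left
      rw [show (1:ℝ)/(16*s) = (1/4) / (4*s) by ring]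
      apply div_le_div_of_nonneg_right ?_ hS.le
      nlinarith [norm_nonneg (x - y)]
    · right; exact h
  exact gc_core n hQ hQ2 hS hP (by positivity) hq_lo hq_hi (Real.sqrt_nonneg _)
    hDbound hPK
end
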